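/- arXiv:2403.02291 — 3 statements merged into one kernel-verified Lean document; each statement's English description precedes it below -/
import Mathlib

section
/- For every integer g ≥ 1 and every integer e, the corank of G_{e,g} equals g: there exists a surjective group homomorphism from G_{e,g} onto the free group FreeGroup (Fin g) of rank g, and there is no surjective group homomorphism from G_{e,g} onto the free group FreeGroup (Fin (g+1)) of rank g+1. -/
/-- The generator `aᵢ` of the circle-bundle group, as an element of the free
group on `2g+1` generators (indexed so that `aᵢ ↦ 2i`, `bᵢ ↦ 2i+1`, `h ↦ 2g`). -/
def genA (g : ℕ) (i : Fin g) : FreeGroup (Fin (2 * g + 1)) :=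
  FreeGroup.of ⟨2 * (i : ℕ), by have := i.isLt; omega⟩

/-- The generator `bᵢ`. -/
def genB (g : ℕ) (i : Fin g) : FreeGroup (Fin (2 * g + 1)) :=
  FreeGroup.of ⟨2 * (i : ℕ) + 1, by have := i.isLt; omega⟩

/-- The generator `h`. -/
def genH (g : ℕ) : FreeGroup (Fin (2 * g + 1)) :=
  FreeGroup.of ⟨2 * g, by omega⟩

open scoped commutatorElement

/-- The relators `[aᵢ, h]`, `[bᵢ, h]` (for `i = 1, …, g`) and
`([a₁,b₁]⋯[a_g,b_g]) * h^(-e)` of the fundamental group of the orientable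
circle bundle over the closed orientable surface of genus `g`
with Euler number `e`. -/
def circleRels (g : ℕ) (e : ℤ) : Set (FreeGroup (Fin (2 * g + 1))) :=
  {r | ∃ i : Fin g, r = ⁅genA g i, genH g⁆ ∨ r = ⁅genB g i, genH g⁆} ∪
    {(List.ofFn fun i : Fin g => ⁅genA g i, genB g i⁆).prod * (genH g) ^ (-e)}

/-- `G_{e,g}`, the fundamental group of the orientable circle bundle over the closed
orientable surface of genus `g` with Euler number `e`, as a presented group. -/
def CircleBundleGroup (g : ℕ) (e : ℤ) : Type :=
  PresentedGroup (circleRels g e)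

instance (g : ℕ) (e : ℤ) : Group (CircleBundleGroup g e) :=
  inferInstanceAs (Group (PresentedGroup (circleRels g e)))

/-! Killing the `bᵢ` and `h` maps `G_{e,g}` onto the free group on the `aᵢ`. Conversely, a
surjection onto a free group of rank `n ≥ 2` sends the central element `h` into the trivial
center, so the images `xᵢ, yᵢ` of the `aᵢ, bᵢ` generate and satisfy `∏ [xᵢ, yᵢ] = 1`. Evaluating
linear functionals on `ℚⁿ` at the exponent-sum vectors of `x₁, y₁, …, x_g, y_g` embeds `(ℚⁿ)*`
into `ℚ²ᵍ`; the `z`-coordinate of the relation mapped to the Heisenberg group shows that the image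
is isotropic for the standard symplectic form, so `n ≤ g`. -/

open Module in
theorem LinearMap.BilinForm.two_mul_finrank_le_of_le_orthogonal {K V : Type*} [Field K]
    [AddCommGroup V] [Module K V] [FiniteDimensional K V] {B : LinearMap.BilinForm K V}
    (hB : B.Nondegenerate) {W : Submodule K V} (hW : W ≤ B.orthogonal W) :
    2 * finrank K W ≤ finrank K V := by
  have := Submodule.finrank_mono hW
  rw [finrank_orthogonal hB] at this
  have := Submodule.finrank_le W
  omega

namespace Matrix

theorem toBilin'_J_sumElim {l K : Type*} [Fintype l] [DecidableEq l] [CommRing K]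
    (p q p' q' : l → K) :
    (J l K).toBilin' (Sum.elim p q) (Sum.elim p' q') = ∑ i, (q i * p' i - p i * q' i) := by
  simp [toBilin'_apply', J, fromBlocks_mulVec, neg_mulVec, dotProduct, Finset.sum_sub_distrib]
  abel

theorem nondegenerate_toBilin'_J (l K : Type*) [Fintype l] [DecidableEq l] [Field K] :
    (J l K).toBilin'.Nondegenerate :=
  LinearMap.BilinForm.nondegenerate_toBilin'_of_det_ne_zero' _ (isUnit_det_J l K).ne_zero

end Matrix

open Module Matrix in
/-- `hwedge` says that `∑ Xᵢ ∧ Yᵢ = 0` in `Λ² V`. -/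
theorem finrank_le_of_span_eq_top_of_sum_wedge_eq_zero {K V : Type*} [Field K] [AddCommGroup V]
    [Module K V] {g : ℕ} (X Y : Fin g → V)
    (hspan : Submodule.span K (Set.range (Sum.elim X Y)) = ⊤)
    (hwedge : ∀ ℓ m : Dual K V, ∑ i, (ℓ (X i) * m (Y i) - ℓ (Y i) * m (X i)) = 0) :
    finrank K V ≤ g := by
  let T : Dual K V →ₗ[K] (Fin g ⊕ Fin g → K) :=
    LinearMap.pi fun s => Dual.eval K V (Sum.elim X Y s)
  have hT : ∀ ℓ, T ℓ = Sum.elim (fun i => ℓ (X i)) (fun i => ℓ (Y i)) := by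
    intro ℓ; ext (i | i) <;> rfl
  have hT_inj : Function.Injective T := by
    rw [← LinearMap.ker_eq_bot, Submodule.eq_bot_iff]
    exact fun ℓ hℓ => LinearMap.ext_on_range hspan fun s => congrFun hℓ s
  have hiso : LinearMap.range T ≤ (J (Fin g) K).toBilin'.orthogonal (LinearMap.range T) := by
    rintro _ ⟨ℓ, rfl⟩ _ ⟨m, rfl⟩
    rw [hT, hT, toBilin'_J_sumElim, ← neg_eq_zero, ← hwedge m ℓ, ← Finset.sum_neg_distrib]
    exact Finset.sum_congr rfl fun i _ => by ring
  have := LinearMap.BilinForm.two_mul_finrank_le_of_le_orthogonal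
    (nondegenerate_toBilin'_J _ K) hiso
  rw [LinearMap.finrank_range_of_inj hT_inj, Subspace.dual_finrank_eq,
    finrank_fintype_fun_eq_card, Fintype.card_sum, Fintype.card_fin] at this
  omega

/-- `⟨x, y, z⟩` stands for the unitriangular matrix `[[1, x, z], [0, 1, y], [0, 0, 1]]`. -/
@[ext] structure Heisenberg (R : Type*) where
  x : R
  y : R
  z : R

namespace Heisenberg

variable {R : Type*} [CommRing R]

instance : Mul (Heisenberg R) := ⟨fun a b => ⟨a.x + b.x, a.y + b.y, a.z + b.z + a.x * b.y⟩⟩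
instance : One (Heisenberg R) := ⟨⟨0, 0, 0⟩⟩
instance : Inv (Heisenberg R) := ⟨fun a => ⟨-a.x, -a.y, -a.z + a.x * a.y⟩⟩

@[simp] lemma mul_x (a b : Heisenberg R) : (a * b).x = a.x + b.x := rfl
@[simp] lemma mul_y (a b : Heisenberg R) : (a * b).y = a.y + b.y := rfl
@[simp] lemma mul_z (a b : Heisenberg R) : (a * b).z = a.z + b.z + a.x * b.y := rfl
@[simp] lemma one_x : (1 : Heisenberg R).x = 0 := rfl
@[simp] lemma one_y : (1 : Heisenberg R).y = 0 := rfl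
@[simp] lemma one_z : (1 : Heisenberg R).z = 0 := rfl
@[simp] lemma inv_x (a : Heisenberg R) : a⁻¹.x = -a.x := rfl
@[simp] lemma inv_y (a : Heisenberg R) : a⁻¹.y = -a.y := rfl
@[simp] lemma inv_z (a : Heisenberg R) : a⁻¹.z = -a.z + a.x * a.y := rfl

instance : Group (Heisenberg R) where
  mul_assoc a b c := by ext <;> simp only [mul_x, mul_y, mul_z] <;> ring
  one_mul a := by ext <;> simp
  mul_one a := by ext <;> simp
  inv_mul_cancel a := by
    ext <;> simp only [mul_x, mul_y, mul_z, inv_x, inv_y, inv_z, one_x, one_y, one_z] <;> ring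

def xHom : Heisenberg R →* Multiplicative R where
  toFun a := .ofAdd a.x
  map_one' := rfl
  map_mul' _ _ := rfl

def yHom : Heisenberg R →* Multiplicative R where
  toFun a := .ofAdd a.y
  map_one' := rfl
  map_mul' _ _ := rfl

lemma commutatorElement_eq (a b : Heisenberg R) :
    ⁅a, b⁆ = ⟨0, 0, a.x * b.y - b.x * a.y⟩ := by
  ext <;> simp [commutatorElement_def]
  ring

lemma prod_ofFn_commutatorElement {g : ℕ} (a b : Fin g → Heisenberg R) :
    (List.ofFn fun i => ⁅a i, b i⁆).prod =
      ⟨0, 0, ∑ i, ((a i).x * (b i).y - (b i).x * (a i).y)⟩ := by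
  induction g with
  | zero => rfl
  | succ g ih =>
    rw [List.ofFn_succ, List.prod_cons, ih, Fin.sum_univ_succ, commutatorElement_eq]
    ext <;> simp

end Heisenberg

theorem FreeGroup.center_eq_bot {α : Type*} [Nontrivial α] :
    Subgroup.center (FreeGroup α) = ⊥ := by
  classical
  refine (Subgroup.eq_bot_iff_forall _).2 fun w hw => by_contra fun hne => ?_
  have hw_nil : w.toWord ≠ [] := mt toWord_eq_nil_iff.1 hne
  obtain ⟨⟨p, s⟩, t, hhead⟩ := List.exists_cons_of_ne_nil hw_nil
  obtain ⟨L, ⟨c, ε⟩, hlast⟩ := (List.eq_nil_or_concat w.toWord).resolve_left hw_nil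
  obtain ⟨q, hqp⟩ := exists_ne p
  -- `q` differs from the first letter of `w` and `ε` is the sign of its last letter,
  -- so the letter `(q, ε)` cancels on neither side of `w`
  have hleft : (mk [(q, ε)] * w).toWord = (q, ε) :: w.toWord := by
    conv_lhs => rw [← mk_toWord (x := w), mul_mk, toWord_mk]
    refine IsReduced.reduce_eq ?_
    have hw_red : IsReduced ((p, s) :: t) := hhead ▸ isReduced_toWord
    rw [hhead]
    exact List.isChain_cons_cons.2 ⟨fun h => absurd h hqp, hw_red⟩
  have hright : (w * mk [(q, ε)]).toWord = w.toWord ++ [(q, ε)] := by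
    conv_lhs => rw [← mk_toWord (x := w), mul_mk, toWord_mk]
    refine IsReduced.reduce_eq (List.isChain_append.2 ⟨isReduced_toWord, .singleton _, ?_⟩)
    simp [hlast]
  have := congrArg toWord (Subgroup.mem_center_iff.1 hw (mk [(q, ε)]))
  rw [hleft, hright, hhead] at this
  simp at this
  exact hqp this.1.1

theorem FreeGroup.card_le_of_prod_commutatorElement_eq_one {ι : Type*} [Fintype ι] {g : ℕ}
    (x y : Fin g → FreeGroup ι) (hgen : Subgroup.closure (Set.range x ∪ Set.range y) = ⊤)
    (hrel : (List.ofFn fun i => ⁅x i, y i⁆).prod = 1) : Fintype.card ι ≤ g := by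
  classical
  let v : FreeGroup ι →* Multiplicative (ι → ℚ) := lift fun j => .ofAdd (Pi.single j 1)
  have key := finrank_le_of_span_eq_top_of_sum_wedge_eq_zero (K := ℚ)
    (fun i => (v (x i)).toAdd) (fun i => (v (y i)).toAdd) ?span ?wedge
  · rwa [Module.finrank_fintype_fun_eq_card] at key
  case span =>
    set S := Submodule.span ℚ
      (Set.range (Sum.elim (fun i => (v (x i)).toAdd) fun i => (v (y i)).toAdd))
    have hS : ⊤ ≤ (AddSubgroup.toSubgroup S.toAddSubgroup).comap v := by
      rw [← hgen, Subgroup.closure_le]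
      rintro _ (⟨i, rfl⟩ | ⟨i, rfl⟩)
      exacts [Submodule.subset_span ⟨.inl i, rfl⟩, Submodule.subset_span ⟨.inr i, rfl⟩]
    rw [eq_top_iff, ← (Pi.basisFun ℚ ι).span_eq, Submodule.span_le]
    rintro _ ⟨j, rfl⟩
    simpa [v] using hS (Subgroup.mem_top (of j))
  case wedge =>
    intro ℓ m
    let Θ : FreeGroup ι →* Heisenberg ℚ :=
      lift fun j => ⟨ℓ (Pi.single j 1), m (Pi.single j 1), 0⟩
    have hx : ∀ w, (Θ w).x = ℓ (v w).toAdd := DFunLike.congr_fun <|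
      ext_hom (Heisenberg.xHom.comp Θ) (ℓ.toAddMonoidHom.toMultiplicative.comp v) fun j => by
        simp [Θ, v, Heisenberg.xHom]
    have hy : ∀ w, (Θ w).y = m (v w).toAdd := DFunLike.congr_fun <|
      ext_hom (Heisenberg.yHom.comp Θ) (m.toAddMonoidHom.toMultiplicative.comp v) fun j => by
        simp [Θ, v, Heisenberg.yHom]
    have hz := congrArg Heisenberg.z (congrArg Θ hrel)
    rw [_root_.map_one, map_list_prod, List.map_ofFn] at hz
    simpa only [Function.comp_def, map_commutatorElement, Heisenberg.prod_ofFn_commutatorElement,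
      hx, hy, Heisenberg.one_z] using hz

theorem Subgroup.closure_image_eq_top_of_surjective {G N : Type*} [Group G] [Group N]
    {f : G →* N} (hf : Function.Surjective f) {s : Set G} (hs : Subgroup.closure s = ⊤) :
    Subgroup.closure (f '' s) = ⊤ := by
  rw [← MonoidHom.map_closure, hs, Subgroup.map_top_of_surjective f hf]

theorem not_surjective_freeGroup_of_prod_commutatorElement_eq_zpow {G ι : Type*} [Group G]
    [Fintype ι] [Nontrivial ι] {g : ℕ} (a b : Fin g → G) (h : G) (e : ℤ)
    (hgen : Subgroup.closure (Set.range a ∪ Set.range b ∪ {h}) = ⊤)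
    (ha : ∀ i, Commute (a i) h) (hb : ∀ i, Commute (b i) h)
    (hrel : (List.ofFn fun i => ⁅a i, b i⁆).prod = h ^ e)
    (hcard : g < Fintype.card ι) (φ : G →* FreeGroup ι) : ¬ Function.Surjective φ := by
  intro hφ
  have himg : Subgroup.closure (Set.range (φ ∘ a) ∪ Set.range (φ ∘ b) ∪ {φ h}) = ⊤ := by
    rw [← Subgroup.closure_image_eq_top_of_surjective hφ hgen]
    simp only [Set.image_union, Set.image_singleton, Set.range_comp]
  have hh : φ h = 1 := by
    have hcent : φ h ∈ Subgroup.centralizer (Subgroup.closure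
        (Set.range (φ ∘ a) ∪ Set.range (φ ∘ b) ∪ {φ h})) := by
      rw [Subgroup.centralizer_closure, Subgroup.mem_centralizer_iff]
      rintro _ ((⟨i, rfl⟩ | ⟨i, rfl⟩) | rfl)
      exacts [((ha i).map φ).eq, ((hb i).map φ).eq, rfl]
    rwa [himg, Subgroup.coe_top, Subgroup.centralizer_univ, FreeGroup.center_eq_bot,
      Subgroup.mem_bot] at hcent
  refine (FreeGroup.card_le_of_prod_commutatorElement_eq_one (φ ∘ a) (φ ∘ b) ?_ ?_).not_gt hcard
  · rwa [hh, Set.union_singleton, Subgroup.closure_insert_one] at himg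
  · simpa [map_list_prod, List.map_ofFn, Function.comp_def, hh] using congrArg φ hrel

lemma closure_genA_genB_genH (g : ℕ) :
    Subgroup.closure (Set.range (genA g) ∪ Set.range (genB g) ∪ {genH g}) = ⊤ := by
  rw [eq_top_iff, ← FreeGroup.closure_range_of, Subgroup.closure_le]
  rintro _ ⟨⟨j, hj⟩, rfl⟩
  apply Subgroup.subset_closure
  obtain hH | hlt := eq_or_lt_of_le (Nat.le_of_lt_succ hj)
  · exact .inr (by simp [genH, hH])
  · obtain ⟨i, rfl | rfl⟩ := Nat.even_or_odd' j
    · exact .inl (.inl ⟨⟨i, by omega⟩, rfl⟩)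
    · exact .inl (.inr ⟨⟨i, by omega⟩, rfl⟩)

def forgetBH (g : ℕ) (j : Fin (2 * g + 1)) : FreeGroup (Fin g) :=
  if hj : (j : ℕ) % 2 = 0 ∧ (j : ℕ) < 2 * g then FreeGroup.of ⟨j / 2, by omega⟩ else 1

@[simp] lemma lift_forgetBH_genA (g : ℕ) (i : Fin g) :
    FreeGroup.lift (forgetBH g) (genA g i) = FreeGroup.of i := by
  simp [genA, forgetBH]

@[simp] lemma lift_forgetBH_genB (g : ℕ) (i : Fin g) :
    FreeGroup.lift (forgetBH g) (genB g i) = 1 := by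
  simp [genB, forgetBH, Nat.add_mod]

@[simp] lemma lift_forgetBH_genH (g : ℕ) : FreeGroup.lift (forgetBH g) (genH g) = 1 := by
  simp [genH, forgetBH]

lemma lift_forgetBH_eq_one_of_mem_circleRels (g : ℕ) (e : ℤ) :
    ∀ r ∈ circleRels g e, FreeGroup.lift (forgetBH g) r = 1 := by
  rintro r (⟨i, rfl | rfl⟩ | rfl) <;>
    simp [map_list_prod, List.map_ofFn, Function.comp_def]

def CircleBundleGroup.toFreeGroup (g : ℕ) (e : ℤ) : CircleBundleGroup g e →* FreeGroup (Fin g) :=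
  PresentedGroup.toGroup (lift_forgetBH_eq_one_of_mem_circleRels g e)

lemma CircleBundleGroup.toFreeGroup_surjective (g : ℕ) (e : ℤ) :
    Function.Surjective (CircleBundleGroup.toFreeGroup g e) := by
  let s : FreeGroup (Fin g) →* CircleBundleGroup g e :=
    FreeGroup.lift fun i => PresentedGroup.mk (circleRels g e) (genA g i)
  have hs : (CircleBundleGroup.toFreeGroup g e).comp s = MonoidHom.id _ :=
    FreeGroup.ext_hom _ _ fun i => lift_forgetBH_genA g i
  exact fun w => ⟨s w, DFunLike.congr_fun hs w⟩

theorem stmt_2 (g : ℕ) (hg : 1 ≤ g) (e : ℤ) :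
    (∃ φ : CircleBundleGroup g e →* FreeGroup (Fin g), Function.Surjective φ) ∧
      ¬ ∃ φ : CircleBundleGroup g e →* FreeGroup (Fin (g + 1)),
          Function.Surjective φ := by
  refine ⟨⟨_, CircleBundleGroup.toFreeGroup_surjective g e⟩, fun ⟨φ, hφ⟩ => ?_⟩
  have : Nontrivial (Fin (g + 1)) := Fin.nontrivial_iff_two_le.2 (by omega)
  have hrel : ∀ r ∈ circleRels g e, PresentedGroup.mk (circleRels g e) r = 1 :=
    fun r hr => PresentedGroup.one_of_mem hr
  refine not_surjective_freeGroup_of_prod_commutatorElement_eq_zpow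
    (fun i => PresentedGroup.mk _ (genA g i)) (fun i => PresentedGroup.mk _ (genB g i))
    (PresentedGroup.mk _ (genH g)) e ?_ (fun i => ?_) (fun i => ?_) ?_ (by simp) φ hφ
  · have := Subgroup.closure_image_eq_top_of_surjective
      (PresentedGroup.mk_surjective (circleRels g e)) (closure_genA_genB_genH g)
    rwa [Set.image_union, Set.image_union, Set.image_singleton, ← Set.range_comp,
      ← Set.range_comp] at this
  · exact commutatorElement_eq_one_iff_commute.1 (by simpa using hrel _ (.inl ⟨i, .inl rfl⟩))
  · exact commutatorElement_eq_one_iff_commute.1 (by simpa using hrel _ (.inl ⟨i, .inr rfl⟩))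
  · simpa [map_list_prod, List.map_ofFn, Function.comp_def, _root_.zpow_neg, mul_inv_eq_one]
      using hrel _ (.inr rfl)
end

section
/- Let g ≥ 1 and e ∈ {1, −1}. The rank of G_{e,g} equals 2g: there exists a set of 2g elements generating G_{e,g} (namely the classes of a_1, b_1, …, a_g, b_g, since the relator [a_1,b_1]⋯[a_g,b_g] = h^{±1} expresses h in terms of them), and no set of fewer than 2g elements generates G_{e,g}. -/
open scoped commutatorElement

/-!
The relator `[a₁,b₁]⋯[a_g,b_g] = h^e` with `e = ±1` expresses `h` through the `aᵢ, bᵢ`, so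
these `2g` elements generate. Conversely, sending `h ↦ 1` kills every relator in an abelian
group, so `G_{e,g}` surjects onto `ℤ^{2g}`; a generating set of `G_{e,g}` maps to one of
`ℤ^{2g}`, which spans it as a `ℤ`-module and so has at least `2g` elements.
-/

open Module

theorem finrank_int_le_card_of_closure_eq_top {M : Type*} [AddCommGroup M] {S : Finset M}
    (hS : AddSubgroup.closure (S : Set M) = ⊤) : finrank ℤ M ≤ S.card := by
  have hspan : Submodule.span ℤ (S : Set M) = ⊤ := by
    rw [← Submodule.toAddSubgroup_inj, Submodule.span_int_eq_addSubgroupClosure, hS]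
    rfl
  have h := finrank_span_finset_le_card (R := ℤ) S
  rwa [Set.finrank, hspan, finrank_top] at h

theorem finrank_int_le_card_of_surjective {G M : Type*} [Group G] [AddCommGroup M]
    (f : G →* Multiplicative M) (hf : Function.Surjective f) {S : Finset G}
    (hS : Subgroup.closure (S : Set G) = ⊤) : finrank ℤ M ≤ S.card := by
  classical
  refine (finrank_int_le_card_of_closure_eq_top (S := S.image fun x => (f x).toAdd) ?_).trans
    Finset.card_image_le
  have himage : Subgroup.closure (f '' S) = ⊤ := by
    rw [← MonoidHom.map_closure, hS, Subgroup.map_top_of_surjective f hf]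
  have hclosure := congrArg Subgroup.toAddSubgroup' himage
  rw [Subgroup.toAddSubgroup'_closure, map_top] at hclosure
  convert hclosure using 2
  ext y
  simp only [Finset.coe_image, Set.mem_image, Set.mem_preimage, Finset.mem_coe]
  exact Iff.rfl

namespace CircleBundleGroup

variable {g : ℕ} {e : ℤ}

theorem genH_eq_of_last (g : ℕ) : genH g = FreeGroup.of (Fin.last (2 * g)) := rfl

theorem lift_eq_one_of_mem_circleRels {A : Type*} [CommGroup A] {f : Fin (2 * g + 1) → A}
    (hf : f (Fin.last (2 * g)) = 1) : ∀ r ∈ circleRels g e, FreeGroup.lift f r = 1 := by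
  have lift_commutator : ∀ x y, FreeGroup.lift f ⁅x, y⁆ = 1 := fun x y => by
    rw [map_commutatorElement, commutatorElement_eq_one_iff_mul_comm, mul_comm]
  rintro r (⟨i, rfl | rfl⟩ | rfl)
  · exact lift_commutator _ _
  · exact lift_commutator _ _
  · rw [map_mul, map_zpow, map_list_prod, List.map_ofFn]
    simp [Function.comp_def, lift_commutator, genH_eq_of_last, hf]

variable (g e) in
/-- Induced by the bundle projection onto the first homology of the base surface. -/
def abelianHom : CircleBundleGroup g e →* Multiplicative (Fin (2 * g) → ℤ) :=
  PresentedGroup.toGroup (f := Fin.lastCases 1 fun i => Multiplicative.ofAdd (Pi.single i 1))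
    (lift_eq_one_of_mem_circleRels (Fin.lastCases_last ..))

theorem abelianHom_of_castSucc (i : Fin (2 * g)) :
    abelianHom g e (PresentedGroup.of i.castSucc) = Multiplicative.ofAdd (Pi.single i 1) :=
  (PresentedGroup.toGroup.of _).trans (Fin.lastCases_castSucc ..)

theorem abelianHom_surjective : Function.Surjective (abelianHom g e) := by
  intro y
  rw [← MonoidHom.mem_range]
  have hy : y = ∏ i, Multiplicative.ofAdd (Pi.single i (1 : ℤ)) ^ y.toAdd i := by
    apply Multiplicative.toAdd.injective
    ext j
    simp [toAdd_prod, Finset.sum_apply, Pi.single_apply]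
  rw [hy]
  exact Subgroup.prod_mem _ fun i _ =>
    zpow_mem (MonoidHom.mem_range.mpr ⟨_, abelianHom_of_castSucc i⟩) _

theorem mk_genH_zpow_eq_prod :
    PresentedGroup.mk (circleRels g e) (genH g) ^ e =
      (List.ofFn fun i : Fin g =>
        ⁅PresentedGroup.mk (circleRels g e) (genA g i),
          PresentedGroup.mk (circleRels g e) (genB g i)⁆).prod := by
  have h := PresentedGroup.one_of_mem (rels := circleRels g e) (Or.inr rfl)
  rw [map_mul, map_zpow, map_list_prod, List.map_ofFn, mul_eq_one_iff_eq_inv, zpow_neg,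
    inv_inv] at h
  simpa [Function.comp_def, map_commutatorElement] using h.symm

theorem closure_range_of_castSucc (he : e = 1 ∨ e = -1) :
    Subgroup.closure (Set.range fun i : Fin (2 * g) =>
      (PresentedGroup.of (rels := circleRels g e) i.castSucc : CircleBundleGroup g e)) = ⊤ := by
  set K := Subgroup.closure (Set.range fun i : Fin (2 * g) =>
      (PresentedGroup.of (rels := circleRels g e) i.castSucc : CircleBundleGroup g e))
  have hA : ∀ i, PresentedGroup.mk (circleRels g e) (genA g i) ∈ K := fun i =>
    Subgroup.subset_closure ⟨⟨2 * i, by omega⟩, rfl⟩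
  have hB : ∀ i, PresentedGroup.mk (circleRels g e) (genB g i) ∈ K := fun i =>
    Subgroup.subset_closure ⟨⟨2 * i + 1, by omega⟩, rfl⟩
  have hH : PresentedGroup.mk (circleRels g e) (genH g) ∈ K := by
    have hpow : PresentedGroup.mk (circleRels g e) (genH g) ^ e ∈ K := by
      rw [mk_genH_zpow_eq_prod]
      refine K.list_prod_mem fun x hx => ?_
      obtain ⟨i, rfl⟩ := List.mem_ofFn.mp hx
      rw [commutatorElement_def]
      exact K.mul_mem (K.mul_mem (K.mul_mem (hA i) (hB i)) (K.inv_mem (hA i))) (K.inv_mem (hB i))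
    rcases he with rfl | rfl <;> simpa using hpow
  rw [eq_top_iff, ← PresentedGroup.closure_range_of, Subgroup.closure_le]
  rintro _ ⟨j, rfl⟩
  induction j using Fin.lastCases with
  | last => exact hH
  | cast i => exact Subgroup.subset_closure ⟨i, rfl⟩

end CircleBundleGroup

theorem stmt_5_general (g : ℕ) (e : ℤ) (he : e = 1 ∨ e = -1) :
    (Subgroup.closure
        (Set.range fun i : Fin (2 * g) =>
          (PresentedGroup.of (rels := circleRels g e) i.castSucc :
            CircleBundleGroup g e)) = ⊤) ∧
      (∀ S : Finset (CircleBundleGroup g e),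
        Subgroup.closure (S : Set (CircleBundleGroup g e)) = ⊤ → 2 * g ≤ S.card) := by
  refine ⟨CircleBundleGroup.closure_range_of_castSucc he, fun S hS => ?_⟩
  simpa using finrank_int_le_card_of_surjective _ CircleBundleGroup.abelianHom_surjective hS

theorem stmt_5 (g : ℕ) (hg : 1 ≤ g) (e : ℤ) (he : e = 1 ∨ e = -1) :
    (Subgroup.closure
        (Set.range fun i : Fin (2 * g) =>
          (PresentedGroup.of (rels := circleRels g e) i.castSucc :
            CircleBundleGroup g e)) = ⊤) ∧
      (∀ S : Finset (CircleBundleGroup g e),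
        Subgroup.closure (S : Set (CircleBundleGroup g e)) = ⊤ → 2 * g ≤ S.card) :=
  stmt_5_general g e he
end

section
/- Let G be a group generated by r elements (i.e., there is a subset S of G with |S| = r whose generated subgroup is all of G). If φ : G → FreeGroup (Fin r) is a surjective group homomorphism onto the free group of rank r, then φ is an isomorphism; in particular G is isomorphic to the free group of rank r. -/
/-!
Free groups are residually finite: a nontrivial reduced word `w` of length `n` is detected by an
action on the `n + 1` positions `0, …, n` of `w`, in which every generator moves each position
across the letters it labels, so that `w` carries `n` to `0`; reducedness of `w` is exactly what
lets the generator's partial moves extend to permutations. By Mal'cev's argument, a finitely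
generated residually finite group `G` is Hopfian: precomposition with a surjective endomorphism
is injective, hence bijective, on the finite set of homomorphisms from `G` to a finite quotient.
Since `G` is a quotient `π` of `F_r`, the surjective endomorphism `φ ∘ π` of `F_r` is injective,
and so is `φ`.
-/

open Function

theorem Set.InjOn.exists_perm_apply_eq {ι β : Type*} [Finite β] {src tgt : ι → β} {s : Set ι}
    (hsrc : Set.InjOn src s) (htgt : Set.InjOn tgt s) :
    ∃ σ : Equiv.Perm β, ∀ i ∈ s, σ (src i) = tgt i := by
  classical
  let e : src '' s ≃ tgt '' s :=
    (Equiv.Set.imageOfInjOn src s hsrc).symm.trans (Equiv.Set.imageOfInjOn tgt s htgt)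
  refine ⟨e.extendSubtype, fun i hi => ?_⟩
  have hmem : src i ∈ src '' s := ⟨i, hi, rfl⟩
  have hsymm : (Equiv.Set.imageOfInjOn src s hsrc).symm ⟨src i, hmem⟩ = ⟨i, hi⟩ :=
    (Equiv.symm_apply_eq _).mpr rfl
  rw [Equiv.extendSubtype_apply_of_mem e _ hmem]
  simp only [e, Equiv.trans_apply, hsymm]
  rfl

theorem List.prod_smul_eq_of_forall_getElem_smul {M β : Type*} [Monoid M] [MulAction M β] :
    ∀ (l : List M) (p : ℕ → β), (∀ i (hi : i < l.length), l[i] • p (i + 1) = p i) →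
      l.prod • p l.length = p 0
  | [], _, _ => by simp
  | τ :: l, p, h => by
    rw [List.prod_cons, mul_smul, List.length_cons, List.prod_smul_eq_of_forall_getElem_smul l
      (fun i => p (i + 1)) fun i hi => h (i + 1) (by simpa using hi)]
    exact h 0 (by simp)

namespace FreeGroup

variable {α : Type*} {L : List (α × Bool)}

theorem IsReduced.snd_eq_of_fst_eq (hL : IsReduced L) {i j : Fin L.length}
    (hij : i.val + 1 = j.val) (h : L[i].1 = L[j].1) : L[i].2 = L[j].2 := by
  obtain ⟨j, hj⟩ := j
  obtain rfl : j = i.val + 1 := hij.symm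
  exact List.isChain_iff_getElem.mp hL i hj h

/- Letter `i` of `L` joins the positions `i` and `i + 1`; the permutation of its generator must
carry the source to the target, so that the letter itself (inverted when negative) carries
`i + 1` to `i`. -/
variable (L) in
def letterSource (i : Fin L.length) : Fin (L.length + 1) :=
  if L[i].2 then i.succ else i.castSucc

variable (L) in
def letterTarget (i : Fin L.length) : Fin (L.length + 1) :=
  if L[i].2 then i.castSucc else i.succ

theorem IsReduced.injOn_letterSource (hL : IsReduced L) (a : α) :
    Set.InjOn (letterSource L) {i | L[i].1 = a} := by
  intro i hi j hj hij
  simp only [letterSource] at hij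
  split_ifs at hij with hbi hbj hbj <;>
    simp only [Fin.ext_iff, Fin.val_succ, Fin.val_castSucc] at hij ⊢
  · omega
  · exact absurd (hL.snd_eq_of_fst_eq hij (hi.trans hj.symm)) (by simp_all)
  · exact absurd (hL.snd_eq_of_fst_eq hij.symm (hj.trans hi.symm)) (by simp_all)
  · omega

theorem IsReduced.injOn_letterTarget (hL : IsReduced L) (a : α) :
    Set.InjOn (letterTarget L) {i | L[i].1 = a} := by
  intro i hi j hj hij
  simp only [letterTarget] at hij
  split_ifs at hij with hbi hbj hbj <;>
    simp only [Fin.ext_iff, Fin.val_succ, Fin.val_castSucc] at hij ⊢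
  · omega
  · exact absurd (hL.snd_eq_of_fst_eq hij.symm (hj.trans hi.symm)) (by simp_all)
  · exact absurd (hL.snd_eq_of_fst_eq hij (hi.trans hj.symm)) (by simp_all)
  · omega

theorem IsReduced.exists_perm (hL : IsReduced L) :
    ∃ σ : α → Equiv.Perm (Fin (L.length + 1)),
      ∀ i : Fin L.length, σ L[i].1 (letterSource L i) = letterTarget L i := by
  choose σ hσ using fun a =>
    (hL.injOn_letterSource a).exists_perm_apply_eq (hL.injOn_letterTarget a)
  exact ⟨σ, fun i => hσ _ i rfl⟩

theorem lift_mk_last_eq_zero {σ : α → Equiv.Perm (Fin (L.length + 1))}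
    (hσ : ∀ i : Fin L.length, σ L[i].1 (letterSource L i) = letterTarget L i) :
    lift σ (mk L) (Fin.last L.length) = 0 := by
  have hstep : ∀ i (hi : i < L.length),
      cond L[i].2 (σ L[i].1) (σ L[i].1)⁻¹ (Fin.clamp (i + 1) L.length) = Fin.clamp i L.length := by
    intro i hi
    have hsucc : Fin.clamp (i + 1) L.length = (⟨i, hi⟩ : Fin L.length).succ :=
      Fin.ext (by simp [Fin.clamp]; omega)
    have hcast : Fin.clamp i L.length = (⟨i, hi⟩ : Fin L.length).castSucc :=
      Fin.ext (by simp [Fin.clamp]; omega)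
    have := hσ ⟨i, hi⟩
    simp only [letterSource, letterTarget, Fin.getElem_fin] at this
    rw [hsucc, hcast]
    cases hb : L[i].2 <;>
      simp only [hb, cond_true, cond_false, if_true, Bool.false_eq_true, if_false] at this ⊢
    · exact Equiv.Perm.inv_eq_iff_eq.mpr this.symm
    · exact this
  have := List.prod_smul_eq_of_forall_getElem_smul
    (L.map fun y => cond y.2 (σ y.1) (σ y.1)⁻¹) (Fin.clamp · L.length)
    (fun i hi => by simpa [Equiv.Perm.smul_def] using hstep i (by simpa using hi))
  rw [List.length_map, Fin.clamp_eq_last _ _ le_rfl] at this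
  simpa [lift_mk, Equiv.Perm.smul_def, Fin.clamp] using this

theorem exists_perm_hom_ne_one {x : FreeGroup α} (hx : x ≠ 1) :
    ∃ (n : ℕ) (f : FreeGroup α →* Equiv.Perm (Fin n)), f x ≠ 1 := by
  classical
  obtain ⟨σ, hσ⟩ := (isReduced_toWord (x := x)).exists_perm
  refine ⟨_, lift σ, fun h => ?_⟩
  have := lift_mk_last_eq_zero hσ
  rw [mk_toWord, h] at this
  have hne : x.toWord.length ≠ 0 := by simpa using hx
  exact hne (congrArg Fin.val this)

instance : Group.ResiduallyFinite (FreeGroup α) :=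
  Group.residuallyFinite_of_forall_exists_finite_monoidHom fun _ hx =>
    let ⟨_, f, hf⟩ := exists_perm_hom_ne_one hx
    ⟨_, _, inferInstance, f, hf⟩

end FreeGroup

instance MonoidHom.finite_of_fg {G Q : Type*} [Group G] [Group.FG G] [Monoid Q] [Finite Q] :
    Finite (G →* Q) := by
  obtain ⟨α, _, π, hπ⟩ := Group.fg_iff_exists_freeGroup_hom_surjective_finite.mp ‹Group.FG G›
  refine Finite.of_injective (fun k : G →* Q => k ∘ π ∘ FreeGroup.of) fun k₁ k₂ h => ?_
  exact (MonoidHom.cancel_right hπ).mp (FreeGroup.ext_hom _ _ (congrFun h))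

theorem MonoidHom.injective_of_surjective_of_residuallyFinite {G : Type*} [Group G] [Group.FG G]
    [Group.ResiduallyFinite G] (f : G →* G) (hf : Surjective f) : Injective f := by
  refine (injective_iff_map_eq_one f).mpr fun g hg => by_contra fun hne => ?_
  obtain ⟨H, hgH⟩ := Group.exists_finiteIndexNormalSubgroup_notMem g hne
  let q := QuotientGroup.mk' H.toSubgroup
  have hcomp : Injective fun k : G →* G ⧸ H.toSubgroup => k.comp f :=
    fun k₁ k₂ h => (MonoidHom.cancel_right hf).mp h
  obtain ⟨k, hk⟩ := Finite.injective_iff_surjective.mp hcomp q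
  have : q g = 1 := by rw [← hk, MonoidHom.comp_apply, hg, map_one]
  exact hgH ((QuotientGroup.eq_one_iff g).mp this)

theorem stmt_7 {G : Type*} [Group G] (r : ℕ) (S : Finset G)
    (hcard : S.card = r) (hgen : Subgroup.closure (S : Set G) = ⊤)
    (φ : G →* FreeGroup (Fin r)) (hφ : Function.Surjective φ) :
    Function.Bijective φ := by
  let e : Fin r ≃ S := (S.equivFinOfCardEq hcard).symm
  let π : FreeGroup (Fin r) →* G := FreeGroup.lift fun i => (e i : G)
  have hπ : Surjective π := by
    rw [FreeGroup.lift_surjective_iff_closure_range_eq_top, ← hgen]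
    exact congrArg _ ((e.surjective.range_comp Subtype.val).trans Subtype.range_coe)
  refine ⟨Injective.of_comp_right ?_ hπ, hφ⟩
  exact (φ.comp π).injective_of_surjective_of_residuallyFinite (hφ.comp hπ)
end
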